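/- Let (X,d) be a locally compact metric space, p,q ∈ X, and suppose the d_0-ball B_{d_0}(p;r) is d-precompact and r ≤ d_0(p,q) < ∞. Then for all sufficiently small δ > 0 there exist points p_0 = p, p_1, ..., p_N ∈ X with N = ⌊r/δ⌋ such that d_0(p,q) = d_0(p_0,p_1) + ... + d_0(p_{N-1},p_N) + d_0(p_N,q) and d_0(p_{k-1},p_k) = δ for all k ∈ {1,...,N}. -/

import Mathlib

open Filter Set
open scoped ENNReal

variable {X : Type*}

/-- The length of the chain `x 0, x 1, …, x n` with respect to the distance `ρ`. -/
noncomputable def chainLengthOf (ρ : X → X → ℝ≥0∞) (x : ℕ → X) (n : ℕ) : ℝ≥0∞ :=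
  ∑ k ∈ Finset.range n, ρ (x k) (x (k + 1))

/-- `x 0, …, x n` is an `ε`-chain from `p` to `q` with respect to `ρ`. -/
def IsChainOf (ρ : X → X → ℝ≥0∞) (ε : ℝ≥0∞) (p q : X) (x : ℕ → X) (n : ℕ) : Prop :=
  x 0 = p ∧ x n = q ∧ ∀ k < n, ρ (x k) (x (k + 1)) ≤ ε

/-- `d_ε`: the infimum of lengths of `ε`-chains joining `p` to `q`. -/
noncomputable def chainDistOf (ρ : X → X → ℝ≥0∞) (ε : ℝ≥0∞) (p q : X) : ℝ≥0∞ :=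
  ⨅ (n : ℕ) (x : ℕ → X) (_ : IsChainOf ρ ε p q x n), chainLengthOf ρ x n

/-- `d_0 = sup_{ε > 0} d_ε`. -/
noncomputable def chainMetricOf (ρ : X → X → ℝ≥0∞) (p q : X) : ℝ≥0∞ :=
  ⨆ (ε : ℝ≥0∞) (_ : 0 < ε), chainDistOf ρ ε p q

/-- `d_ε` for a metric space, with `ρ = edist`. -/
noncomputable def chainDist [PseudoEMetricSpace X] (ε : ℝ≥0∞) (p q : X) : ℝ≥0∞ :=
  chainDistOf (fun a b => edist a b) ε p q

/-- `d_0` for a metric space, with `ρ = edist`. -/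
noncomputable def chainMetric [PseudoEMetricSpace X] (p q : X) : ℝ≥0∞ :=
  chainMetricOf (fun a b => edist a b) p q

/-- The length of a path `γ : [0,1] → X` with respect to `ρ`:
the supremum over partitions `0 = t 0 ≤ t 1 ≤ … ≤ t n = 1` of the partition sums. -/
noncomputable def pathLengthOf (ρ : X → X → ℝ≥0∞) (γ : ℝ → X) : ℝ≥0∞ :=
  ⨆ (n : ℕ) (t : ℕ → ℝ) (_ : t 0 = 0 ∧ t n = 1 ∧ Monotone t),
    ∑ k ∈ Finset.range n, ρ (γ (t k)) (γ (t (k + 1)))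

noncomputable def pathLength [PseudoEMetricSpace X] (γ : ℝ → X) : ℝ≥0∞ :=
  pathLengthOf (fun a b => edist a b) γ

/-- Continuity of a path `γ` on `[0,1]` with respect to the distance `ρ`. -/
def ContinuousWrt (ρ : X → X → ℝ≥0∞) (γ : ℝ → X) : Prop :=
  ∀ t ∈ Icc (0 : ℝ) 1,
    Tendsto (fun s => ρ (γ s) (γ t)) (nhdsWithin t (Icc (0 : ℝ) 1)) (nhds 0)

/-- The induced length metric with respect to `ρ`: the infimum of `ρ`-lengths of
`ρ`-continuous paths joining `p` to `q`. -/
noncomputable def lengthMetricOf (ρ : X → X → ℝ≥0∞) (p q : X) : ℝ≥0∞ :=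
  ⨅ (γ : ℝ → X) (_ : ContinuousWrt ρ γ ∧ γ 0 = p ∧ γ 1 = q), pathLengthOf ρ γ

/-- The induced length metric `d̄` of a metric space. -/
noncomputable def lengthMetric [PseudoEMetricSpace X] (p q : X) : ℝ≥0∞ :=
  lengthMetricOf (fun a b => edist a b) p q

/-!
For small `ε`, cutting a nearly optimal `ε`-chain from `a` to `q` at its last point of chain
length at most `δ` gives a point `b` with `d_ε(a,b) ≤ δ` and `d_ε(b,q)` at most about
`d_0(a,q) - δ`. These points lie in the compact `δ`-ball about `a`, and since
`d_0(x,y) ≤ lim d_{ε_n}(x_n,y_n)` whenever `x_n → x`, `y_n → y` and `ε_n → 0`, a limit point `c`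
as `ε → 0` has `d_0(a,c) ≤ δ` and `d_0(c,q) ≤ d_0(a,q) - δ`; the triangle inequality turns both
into equalities. Repeating this step `⌊r/δ⌋` times from `p` stays within `d_0`-distance `r` of `p`,
near which `δ`-balls are compact for small `δ` by local compactness.
-/

open Metric Topology

section Chains

variable {ρ : X → X → ℝ≥0∞} {ε : ℝ≥0∞} {p q r : X} {x y : ℕ → X} {n m : ℕ}

lemma chainLengthOf_add (ρ : X → X → ℝ≥0∞) (x : ℕ → X) (n m : ℕ) :
    chainLengthOf ρ x (n + m) = chainLengthOf ρ x n + chainLengthOf ρ (fun k => x (n + k)) m :=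
  Finset.sum_range_add _ n m

lemma IsChainOf.take (h : IsChainOf ρ ε p q x n) {j : ℕ} (hj : j ≤ n) :
    IsChainOf ρ ε p (x j) x j :=
  ⟨h.1, rfl, fun k hk => h.2.2 k (hk.trans_le hj)⟩

lemma IsChainOf.drop (h : IsChainOf ρ ε p q x n) {j : ℕ} (hj : j ≤ n) :
    IsChainOf ρ ε (x j) q (fun k => x (j + k)) (n - j) :=
  ⟨rfl, show x (j + (n - j)) = q by rw [Nat.add_sub_cancel' hj]; exact h.2.1,
    fun k hk => h.2.2 (j + k) (by omega)⟩

def chainAppend (x : ℕ → X) (n : ℕ) (y : ℕ → X) (i : ℕ) : X :=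
  if i ≤ n then x i else y (i - n)

lemma chainAppend_of_le {i : ℕ} (h : i ≤ n) : chainAppend x n y i = x i := if_pos h

lemma chainAppend_add (h : x n = y 0) (k : ℕ) : chainAppend x n y (n + k) = y k := by
  rcases Nat.eq_zero_or_pos k with rfl | hk
  · exact (chainAppend_of_le le_rfl).trans h
  · exact (if_neg (by omega)).trans (by rw [Nat.add_sub_cancel_left])

lemma IsChainOf.append (hx : IsChainOf ρ ε p q x n) (hy : IsChainOf ρ ε q r y m) :
    IsChainOf ρ ε p r (chainAppend x n y) (n + m) := by
  have hxy : x n = y 0 := hx.2.1.trans hy.1.symm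
  refine ⟨(chainAppend_of_le n.zero_le).trans hx.1, (chainAppend_add hxy m).trans hy.2.1,
    fun k hk => ?_⟩
  rcases lt_or_ge k n with hkn | hkn
  · rw [chainAppend_of_le hkn.le, chainAppend_of_le hkn]
    exact hx.2.2 k hkn
  · obtain ⟨i, rfl⟩ := Nat.exists_eq_add_of_le hkn
    rw [add_assoc, chainAppend_add hxy, chainAppend_add hxy]
    exact hy.2.2 i (by omega)

lemma chainLengthOf_append (h : x n = y 0) :
    chainLengthOf ρ (chainAppend x n y) (n + m) = chainLengthOf ρ x n + chainLengthOf ρ y m := by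
  rw [chainLengthOf_add, show (fun k => chainAppend x n y (n + k)) = y from
    funext (chainAppend_add h)]
  congr 1
  refine Finset.sum_congr rfl fun k hk => ?_
  have hk : k < n := Finset.mem_range.1 hk
  rw [chainAppend_of_le hk.le, chainAppend_of_le hk]

lemma exists_prefix_chainLengthOf_le (hx : ∀ k < n, ρ (x k) (x (k + 1)) ≤ ε) (δ : ℝ≥0∞) :
    ∃ j ≤ n, chainLengthOf ρ x j ≤ δ ∧ (j = n ∨ δ ≤ chainLengthOf ρ x j + ε) := by
  set j := Nat.findGreatest (fun j => chainLengthOf ρ x j ≤ δ) n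
  have hjn : j ≤ n := Nat.findGreatest_le n
  have hj : chainLengthOf ρ x j ≤ δ :=
    Nat.findGreatest_spec (P := fun j => chainLengthOf ρ x j ≤ δ) n.zero_le
      (by simp [chainLengthOf])
  refine ⟨j, hjn, hj, hjn.eq_or_lt.imp id fun hlt => ?_⟩
  calc δ ≤ chainLengthOf ρ x (j + 1) :=
        (not_le.1 (Nat.findGreatest_is_greatest (P := fun j => chainLengthOf ρ x j ≤ δ)
          (Nat.lt_succ_self j) hlt)).le
    _ = chainLengthOf ρ x j + ρ (x j) (x (j + 1)) := Finset.sum_range_succ _ _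
    _ ≤ chainLengthOf ρ x j + ε := add_le_add_right (hx j hlt) _

end Chains

section ChainDist

variable {ρ : X → X → ℝ≥0∞} {ε θ δ c : ℝ≥0∞} {p q : X} {x : ℕ → X} {n : ℕ}

lemma chainDistOf_le_chainLengthOf (h : IsChainOf ρ ε p q x n) :
    chainDistOf ρ ε p q ≤ chainLengthOf ρ x n :=
  iInf_le_of_le n (iInf_le_of_le x (iInf_le _ h))

lemma chainDistOf_anti (ρ : X → X → ℝ≥0∞) (p q : X) : Antitone fun ε => chainDistOf ρ ε p q :=
  fun _ _ h => le_iInf fun _ => le_iInf fun _ => le_iInf fun hx =>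
    chainDistOf_le_chainLengthOf ⟨hx.1, hx.2.1, fun k hk => (hx.2.2 k hk).trans h⟩

lemma chainDistOf_self (ρ : X → X → ℝ≥0∞) (ε : ℝ≥0∞) (p : X) : chainDistOf ρ ε p p = 0 :=
  nonpos_iff_eq_zero.1 <| (chainDistOf_le_chainLengthOf (x := fun _ => p) (n := 0)
    ⟨rfl, rfl, fun k hk => absurd hk k.not_lt_zero⟩).trans_eq (Finset.sum_range_zero _)

lemma chainDistOf_le (h : ρ p q ≤ ε) : chainDistOf ρ ε p q ≤ ρ p q := by
  have hc : IsChainOf ρ ε p q (fun i => if i = 0 then p else q) 1 :=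
    ⟨rfl, rfl, fun k hk => by simpa [Nat.lt_one_iff.1 hk] using h⟩
  simpa [chainLengthOf] using chainDistOf_le_chainLengthOf hc

lemma chainDistOf_triangle (ρ : X → X → ℝ≥0∞) (ε : ℝ≥0∞) (p q r : X) :
    chainDistOf ρ ε p r ≤ chainDistOf ρ ε p q + chainDistOf ρ ε q r := by
  simp only [chainDistOf, ENNReal.iInf_add, ENNReal.add_iInf]
  refine le_iInf fun m => le_iInf fun y => le_iInf fun hy => le_iInf fun n => le_iInf fun x =>
    le_iInf fun hx => ?_
  rw [← chainLengthOf_append (hx.2.1.trans hy.1.symm)]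
  exact chainDistOf_le_chainLengthOf (hx.append hy)

lemma chainDistOf_le_chainMetricOf (hε : 0 < ε) : chainDistOf ρ ε p q ≤ chainMetricOf ρ p q :=
  le_iSup₂ (f := fun ε (_ : 0 < ε) => chainDistOf ρ ε p q) ε hε

lemma chainMetricOf_le (h : ∀ ε, 0 < ε → chainDistOf ρ ε p q ≤ c) : chainMetricOf ρ p q ≤ c :=
  iSup₂_le h

lemma chainMetricOf_self (ρ : X → X → ℝ≥0∞) (p : X) : chainMetricOf ρ p p = 0 :=
  nonpos_iff_eq_zero.1 <| chainMetricOf_le fun ε _ => (chainDistOf_self ρ ε p).le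

lemma chainMetricOf_triangle (ρ : X → X → ℝ≥0∞) (p q r : X) :
    chainMetricOf ρ p r ≤ chainMetricOf ρ p q + chainMetricOf ρ q r :=
  chainMetricOf_le fun _ hε => (chainDistOf_triangle ρ _ p q r).trans <|
    add_le_add (chainDistOf_le_chainMetricOf hε) (chainDistOf_le_chainMetricOf hε)

lemma chainMetricOf_le_sum (ρ : X → X → ℝ≥0∞) (P : ℕ → X) : ∀ n : ℕ,
    chainMetricOf ρ (P 0) (P n) ≤ ∑ k ∈ Finset.range n, chainMetricOf ρ (P k) (P (k + 1))
  | 0 => (chainMetricOf_self ρ _).le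
  | n + 1 => by
    rw [Finset.sum_range_succ]
    exact (chainMetricOf_triangle ρ _ (P n) _).trans
      (add_le_add_left (chainMetricOf_le_sum ρ P n) _)

lemma exists_chain_near_chainMetricOf (hfin : chainMetricOf ρ p q ≠ ⊤) (hθ : 0 < θ) :
    ∃ ε n x, 0 < ε ∧ ε ≤ θ ∧ IsChainOf ρ ε p q x n ∧
      chainMetricOf ρ p q ≤ chainLengthOf ρ x n + θ ∧
      chainLengthOf ρ x n ≤ chainMetricOf ρ p q + θ := by
  obtain ⟨ε, hε, hεθ, hT⟩ :
      ∃ ε, 0 < ε ∧ ε ≤ θ ∧ chainMetricOf ρ p q ≤ chainDistOf ρ ε p q + θ := by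
    rcases eq_zero_or_pos (chainMetricOf ρ p q) with h0 | hpos
    · exact ⟨θ, hθ, le_rfl, by simp [h0]⟩
    obtain ⟨ε₀, hlt⟩ := lt_iSup_iff.1 (ENNReal.sub_lt_self hfin hpos.ne' hθ.ne')
    obtain ⟨hε₀, hlt⟩ := lt_iSup_iff.1 hlt
    exact ⟨min ε₀ θ, lt_min hε₀ hθ, min_le_right _ _,
      tsub_le_iff_right.1 (hlt.le.trans (chainDistOf_anti ρ p q (min_le_left _ _)))⟩
  have hdfin : chainDistOf ρ ε p q ≠ ⊤ :=
    ne_top_of_le_ne_top hfin (chainDistOf_le_chainMetricOf hε)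
  obtain ⟨n, hlt⟩ := iInf_lt_iff.1 (ENNReal.lt_add_right hdfin hθ.ne')
  obtain ⟨x, hlt⟩ := iInf_lt_iff.1 hlt
  obtain ⟨hx, hL⟩ := iInf_lt_iff.1 hlt
  exact ⟨ε, n, x, hε, hεθ, hx, hT.trans (add_le_add_left (chainDistOf_le_chainLengthOf hx) _),
    hL.le.trans (add_le_add_left (chainDistOf_le_chainMetricOf hε) _)⟩

lemma exists_approx_splitting_point (hθ : 0 < θ) (hδ : δ ≤ chainMetricOf ρ p q)
    (hfin : chainMetricOf ρ p q ≠ ⊤) :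
    ∃ ε, 0 < ε ∧ ε ≤ θ ∧ ∃ b, chainDistOf ρ ε p b ≤ δ ∧
      chainDistOf ρ ε b q ≤ chainMetricOf ρ p q - δ + 2 * θ := by
  obtain ⟨ε, n, x, hε, hεθ, hx, hTL, hLT⟩ := exists_chain_near_chainMetricOf hfin hθ
  obtain ⟨j, hjn, hLj, hjδ⟩ := exists_prefix_chainLengthOf_le hx.2.2 δ
  have hδj : δ ≤ chainLengthOf ρ x j + θ := by
    rcases hjδ with rfl | h
    · exact hδ.trans hTL
    · exact h.trans (add_le_add_right hεθ _)
  have hsplit := chainLengthOf_add ρ x j (n - j)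
  rw [Nat.add_sub_cancel' hjn] at hsplit
  refine ⟨ε, hε, hεθ, x j, (chainDistOf_le_chainLengthOf (hx.take hjn)).trans hLj,
    (chainDistOf_le_chainLengthOf (hx.drop hjn)).trans ?_⟩
  refine ENNReal.le_of_add_le_add_right (ne_top_of_le_ne_top hfin hδ) ?_
  rw [add_right_comm, tsub_add_cancel_of_le hδ]
  calc chainLengthOf ρ (fun k => x (j + k)) (n - j) + δ
      ≤ chainLengthOf ρ (fun k => x (j + k)) (n - j) + (chainLengthOf ρ x j + θ) :=
        add_le_add_right hδj _
    _ = chainLengthOf ρ x n + θ := by rw [hsplit]; ring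
    _ ≤ chainMetricOf ρ p q + θ + θ := add_le_add_left hLT _
    _ = chainMetricOf ρ p q + 2 * θ := by rw [two_mul, add_assoc]

end ChainDist

section PseudoEMetric

variable [PseudoEMetricSpace X]

lemma edist_le_chainLengthOf (x : ℕ → X) : ∀ n : ℕ,
    edist (x 0) (x n) ≤ chainLengthOf (fun a b => edist a b) x n
  | 0 => by simp
  | n + 1 => (edist_triangle _ (x n) _).trans <| by
    rw [chainLengthOf, Finset.sum_range_succ]
    exact add_le_add_left (edist_le_chainLengthOf x n) _

lemma edist_le_chainDist (ε : ℝ≥0∞) (p q : X) : edist p q ≤ chainDist ε p q :=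
  le_iInf fun n => le_iInf fun x => le_iInf fun hx =>
    hx.1 ▸ hx.2.1 ▸ edist_le_chainLengthOf x n

lemma chainMetric_le_of_tendsto {ι : Type*} {l : Filter ι} [l.NeBot] {x y : X} {xs ys : ι → X}
    {ε u : ι → ℝ≥0∞} {c : ℝ≥0∞} (hx : Tendsto xs l (𝓝 x)) (hy : Tendsto ys l (𝓝 y))
    (hε : Tendsto ε l (𝓝 0)) (hu : Tendsto u l (𝓝 c))
    (h : ∀ i, chainDist (ε i) (xs i) (ys i) ≤ u i) : chainMetric x y ≤ c := by
  refine chainMetricOf_le fun ε' hε' => ?_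
  have hx' : Tendsto (fun i => edist x (xs i)) l (𝓝 0) := by
    simpa using (tendsto_const_nhds (x := x)).edist hx
  have hy' : Tendsto (fun i => edist (ys i) y) l (𝓝 0) := by
    simpa using hy.edist (tendsto_const_nhds (x := y))
  refine ge_of_tendsto (by simpa using (hx'.add hu).add hy') ?_
  filter_upwards [hε.eventually (gt_mem_nhds hε'), hx'.eventually (gt_mem_nhds hε'),
    hy'.eventually (gt_mem_nhds hε')] with i hεi hxi hyi
  calc chainDist ε' x y
      ≤ chainDist ε' x (xs i) + chainDist ε' (xs i) (ys i) + chainDist ε' (ys i) y :=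
        (chainDistOf_triangle _ _ _ (ys i) _).trans
          (add_le_add_left (chainDistOf_triangle _ _ _ _ _) _)
    _ ≤ edist x (xs i) + u i + edist (ys i) y := by
        gcongr
        · exact chainDistOf_le (ρ := fun a b => edist a b) hxi.le
        · exact (chainDistOf_anti _ _ _ hεi.le).trans (h i)
        · exact chainDistOf_le (ρ := fun a b => edist a b) hyi.le

lemma exists_chainMetric_splitting_point {a q : X} {δ : ℝ≥0∞} (hK : IsCompact (closedEBall a δ))
    (hδ : δ ≤ chainMetric a q) (hfin : chainMetric a q ≠ ⊤) :
    ∃ c, chainMetric a c = δ ∧ chainMetric a q = δ + chainMetric c q := by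
  have hθ : Tendsto (fun n : ℕ => (n : ℝ≥0∞)⁻¹) atTop (𝓝 0) := ENNReal.tendsto_inv_nat_nhds_zero
  choose ε hε hεθ b hab hbq using fun n : ℕ =>
    exists_approx_splitting_point (ρ := fun a b => edist a b)
      (ENNReal.inv_pos.2 (ENNReal.natCast_ne_top n)) hδ hfin
  obtain ⟨c, -, φ, hφ, hbc⟩ :=
    hK.tendsto_subseq fun n => mem_closedEBall'.2 ((edist_le_chainDist _ _ _).trans (hab n))
  have hθφ := hθ.comp hφ.tendsto_atTop
  have hεφ : Tendsto (ε ∘ φ) atTop (𝓝 0) :=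
    tendsto_of_tendsto_of_tendsto_of_le_of_le tendsto_const_nhds hθφ (fun _ => zero_le)
      fun i => hεθ (φ i)
  have hac : chainMetric a c ≤ δ :=
    chainMetric_le_of_tendsto tendsto_const_nhds hbc hεφ tendsto_const_nhds fun i => hab (φ i)
  have hcq : chainMetric c q ≤ chainMetric a q - δ := by
    have hu := (tendsto_const_nhds (x := chainMetric a q - δ)).add
      (ENNReal.Tendsto.const_mul (a := 2) hθφ (.inr ENNReal.ofNat_ne_top))
    rw [mul_zero, add_zero] at hu
    exact chainMetric_le_of_tendsto hbc tendsto_const_nhds hεφ hu fun i => hbq (φ i)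
  have hsum : δ + chainMetric c q ≤ chainMetric a q :=
    (add_le_add_right hcq δ).trans (add_tsub_cancel_of_le hδ).le
  have hcfin : chainMetric c q ≠ ⊤ := ne_top_of_le_ne_top hfin (le_add_self.trans hsum)
  refine ⟨c, le_antisymm hac (ENNReal.le_of_add_le_add_right hcfin ?_),
    le_antisymm ((chainMetricOf_triangle _ a c q).trans (add_le_add_left hac _)) hsum⟩
  exact hsum.trans (chainMetricOf_triangle _ a c q)

lemma exists_chainMetric_steps {p q : X} {δ R : ℝ≥0∞}
    (hball : ∀ a, chainMetric p a + δ ≤ R → IsCompact (closedEBall a δ))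
    (hR : R ≤ chainMetric p q) (hfin : chainMetric p q ≠ ⊤) : ∀ n : ℕ, n * δ ≤ R →
      ∃ P : ℕ → X, P 0 = p ∧
        chainMetric p q =
          (∑ k ∈ Finset.range n, chainMetric (P k) (P (k + 1))) + chainMetric (P n) q ∧
        ∀ k < n, chainMetric (P k) (P (k + 1)) = δ
  | 0, _ => ⟨fun _ => p, rfl, by simp, by simp⟩
  | n + 1, hn => by
    have hnδ : n * δ + δ ≤ R := by simpa [add_mul] using hn
    obtain ⟨P, hP0, hPq, hPδ⟩ := exists_chainMetric_steps hball hR hfin n (le_self_add.trans hnδ)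
    have hsum : ∑ k ∈ Finset.range n, chainMetric (P k) (P (k + 1)) = n * δ := by
      rw [Finset.sum_congr rfl fun k hk => hPδ k (Finset.mem_range.1 hk)]
      simp
    rw [hsum] at hPq
    have hnfin : (n : ℝ≥0∞) * δ ≠ ⊤ := ne_top_of_le_ne_top hfin (hPq ▸ le_self_add)
    have hPn : chainMetric p (P n) + δ ≤ R :=
      (add_le_add_left (hP0 ▸ hsum ▸ chainMetricOf_le_sum _ P n) δ).trans hnδ
    have hδq : δ ≤ chainMetric (P n) q :=
      ENNReal.le_of_add_le_add_left hnfin (hPq ▸ hnδ.trans hR)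
    obtain ⟨b, hb, hbq⟩ := exists_chainMetric_splitting_point (hball _ hPn) hδq
      (ne_top_of_le_ne_top hfin (hPq ▸ le_add_self))
    have hP' : ∀ k ≤ n, Function.update P (n + 1) b k = P k :=
      fun k hk => Function.update_of_ne (by omega) _ _
    refine ⟨Function.update P (n + 1) b, by rw [hP' 0 n.zero_le, hP0], ?_, fun k hk => ?_⟩
    · rw [Finset.sum_range_succ, Function.update_self, hP' n le_rfl,
        Finset.sum_congr rfl fun k hk => by
          rw [hP' k (Finset.mem_range.1 hk).le, hP' (k + 1) (Finset.mem_range.1 hk)],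
        hsum, hPq, hbq, hb, add_assoc]
    · rcases (Nat.lt_succ_iff.1 hk).lt_or_eq with hkn | rfl
      · rw [hP' k hkn.le, hP' (k + 1) hkn]
        exact hPδ k hkn
      · rw [hP' k le_rfl, Function.update_self, hb]

end PseudoEMetric

/-- weak additivity. If `(X,d)` is locally compact, the `d_0`-ball
`B_{d_0}(p;r)` is `d`-precompact and `r ≤ d_0(p,q) < ∞`, then for all sufficiently
small `δ > 0` there are points `P 0 = p, P 1, …, P N` with `N = ⌊r/δ⌋` such that
`d_0(p,q) = d_0(P 0,P 1) + ⋯ + d_0(P (N-1), P N) + d_0(P N, q)` and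
`d_0(P (k-1), P k) = δ` for all `k`. -/
theorem chainMetric_weak_additivity {X : Type*} [MetricSpace X] [LocallyCompactSpace X]
    (p q : X) (r : ℝ)
    (hpre : IsCompact (closure {y : X | chainMetric p y < ENNReal.ofReal r}))
    (hr : ENNReal.ofReal r ≤ chainMetric p q) (hfin : chainMetric p q ≠ ⊤) :
    ∃ δ₀ : ℝ, 0 < δ₀ ∧ ∀ δ : ℝ, 0 < δ → δ ≤ δ₀ →
      ∃ P : ℕ → X, P 0 = p ∧
        chainMetric p q =
          (∑ k ∈ Finset.range ⌊r / δ⌋₊, chainMetric (P k) (P (k + 1))) +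
            chainMetric (P ⌊r / δ⌋₊) q ∧
        ∀ k < ⌊r / δ⌋₊, chainMetric (P k) (P (k + 1)) = ENNReal.ofReal δ := by
  obtain ⟨η, hη, hKη⟩ := hpre.exists_isCompact_cthickening
  refine ⟨η, hη, fun δ hδ hδη => exists_chainMetric_steps (fun a ha => ?_) hr hfin _ ?_⟩
  · have ha' : a ∈ {y : X | chainMetric p y < ENNReal.ofReal r} :=
      (ENNReal.lt_add_right (ne_top_of_le_ne_top ENNReal.ofReal_ne_top (le_self_add.trans ha))
        (by simpa using hδ)).trans_le ha
    rw [closedEBall_ofReal hδ.le]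
    exact hKη.of_isClosed_subset isClosed_closedBall
      ((closedBall_subset_cthickening (subset_closure ha') δ).trans (cthickening_mono hδη _))
  · rcases Nat.eq_zero_or_pos ⌊r / δ⌋₊ with h0 | hpos
    · simp [h0]
    rw [← ENNReal.ofReal_natCast, ← ENNReal.ofReal_mul (Nat.cast_nonneg _)]
    exact ENNReal.ofReal_le_ofReal ((le_div_iff₀ hδ).1 ((Nat.le_floor_iff' hpos.ne').1 le_rfl))
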